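/- Let d ≥ 2, let H = (V, E) be a d-sparse finite graph with d-critical cover 𝒳, and suppose every d-critical component of H has at least d + 2 vertices. Put a_j = Σ_{U ∈ Θ_j(𝒳)} (d_𝒳(U) − 1) for 0 ≤ j ≤ d. Then for every 0 ≤ k ≤ d − 2 such that Θ_k(𝒳) ≠ ∅ (for k = 0 this means |𝒳| ≥ 2), we have (d − k)(k + 1) a_{k+1} − binom(k+2, 2) a_{k+2} < binom(d+1−k, 2) a_k. -/

import Mathlib

open Finset
open scoped Classical

variable {α : Type*} [DecidableEq α]

/-- The set of edges of `E` with both endpoints in `X`. -/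
noncomputable def inducedEdges (E : Finset (Sym2 α)) (X : Finset α) : Finset (Sym2 α) :=
  E.filter fun e => ∀ v ∈ e, v ∈ X

/-- `i_G(X)`: the number of edges of `E` with both endpoints in `X`. -/
noncomputable def iG (E : Finset (Sym2 α)) (X : Finset α) : ℕ :=
  (inducedEdges E X).card

/-- `E` is a valid edge set on the vertex set `V`: edges are loopless and join vertices of `V`. -/
def ValidOn (V : Finset α) (E : Finset (Sym2 α)) : Prop :=
  ∀ e ∈ E, ¬ e.IsDiag ∧ ∀ v ∈ e, v ∈ V

/-- The graph `(V, E)` is `d`-sparse: every `X ⊆ V` with `|X| ≥ d` satisfies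
`i(X) ≤ d|X| - (d+1 choose 2)`. -/
noncomputable def Sparse (d : ℕ) (V : Finset α) (E : Finset (Sym2 α)) : Prop :=
  ∀ X ⊆ V, d ≤ X.card → iG E X + Nat.choose (d + 1) 2 ≤ d * X.card

/-- `(U, F)` is a subgraph of `(V, E)`. -/
def IsSubgraph (V : Finset α) (E : Finset (Sym2 α)) (U : Finset α) (F : Finset (Sym2 α)) :
    Prop :=
  U ⊆ V ∧ F ⊆ E ∧ ∀ e ∈ F, ∀ v ∈ e, v ∈ U

/-- The graph `(U, F)` is `d`-critical: either `|U| = 2` and `|F| = 1`, or `|U| ≥ d + 2` and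
`|F| = d|U| - (d+1 choose 2)`. -/
def Critical (d : ℕ) (U : Finset α) (F : Finset (Sym2 α)) : Prop :=
  (U.card = 2 ∧ F.card = 1) ∨
  (d + 2 ≤ U.card ∧ F.card + Nat.choose (d + 1) 2 = d * U.card)

/-- `(U, F)` is a `d`-critical subgraph of `(V, E)`. -/
def CritSubgraph (d : ℕ) (V : Finset α) (E : Finset (Sym2 α)) (U : Finset α)
    (F : Finset (Sym2 α)) : Prop :=
  IsSubgraph V E U F ∧ Critical d U F

/-- `(U, F)` is a `d`-critical component of `(V, E)`: a `d`-critical subgraph not properly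
contained in any other `d`-critical subgraph. -/
def CritComponent (d : ℕ) (V : Finset α) (E : Finset (Sym2 α)) (U : Finset α)
    (F : Finset (Sym2 α)) : Prop :=
  CritSubgraph d V E U F ∧
  ∀ U' F', CritSubgraph d V E U' F' → U ⊆ U' → F ⊆ F' → U = U' ∧ F = F'

/-- The `d`-critical cover of `(V, E)`: the family of vertex sets of its `d`-critical
components. -/
noncomputable def critCover (d : ℕ) (V : Finset α) (E : Finset (Sym2 α)) :
    Finset (Finset α) :=
  V.powerset.filter fun U => ∃ F, CritComponent d V E U F

/-- `d_𝒳(W)`: the number of members of the family `𝒳` containing `W`. -/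
def degX (𝒳 : Finset (Finset α)) (W : Finset α) : ℕ :=
  (𝒳.filter fun X => W ⊆ X).card

/-- `Θ_k(𝒳)`: the set of `k`-hinges of `𝒳`, i.e. `k`-element subsets of `V` lying in at least
two members of `𝒳`.  (For `k = 0` this is `{∅}` exactly when `|𝒳| ≥ 2`.) -/
noncomputable def theta (V : Finset α) (𝒳 : Finset (Finset α)) (k : ℕ) :
    Finset (Finset α) :=
  V.powerset.filter fun W => W.card = k ∧ 2 ≤ degX 𝒳 W

/-- `𝒳` is a cover of `(V, E)`: every member has at least two vertices and every edge is
induced by some member. -/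
def IsCover (E : Finset (Sym2 α)) (𝒳 : Finset (Finset α)) : Prop :=
  (∀ X ∈ 𝒳, 2 ≤ X.card) ∧ ∀ e ∈ E, ∃ X ∈ 𝒳, ∀ v ∈ e, v ∈ X

/-- `𝒳` is `t`-thin: any two distinct members intersect in at most `t` vertices. -/
def Thin (t : ℕ) (𝒳 : Finset (Finset α)) : Prop :=
  ∀ X ∈ 𝒳, ∀ Y ∈ 𝒳, X ≠ Y → (X ∩ Y).card ≤ t

/-- `(V, F)` is a maximal `d`-sparse (spanning) subgraph of `(V, E)`. -/
noncomputable def MaxSparse (d : ℕ) (V : Finset α) (E F : Finset (Sym2 α)) : Prop :=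
  F ⊆ E ∧ Sparse d V F ∧ ∀ e ∈ E, e ∉ F → ¬ Sparse d V (insert e F)

/-!
Fix a `k`-hinge `W`, let `𝒮` be the `m = d_𝒳(W) ≥ 2` critical components containing `W`, and
`Y` their union. Every member `X` of `𝒮` is tight, `d|X| = i(X) + (d+1 choose 2)`, whereas `Y`,
a union of at least two components, is not, so `i(Y) + (d+1 choose 2) < d|Y|` by maximality.
Counting the vertices and edges of the members of `𝒮` with multiplicity against those of `Y`
gives
  `d k (m - 1) + d ∑_v (d_𝒳(W + v) - 1) + 1 ≤ (d+1 choose 2) (m - 1) + ∑_e (d_𝒳(W ∪ e) - 1)`,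
over the vertices `v` and edges `e` for which `W + v`, resp. `W ∪ e`, is again a hinge.
An edge meets `W` in two, one or no vertices, so `W ∪ e` is a hinge of size `k`, `k + 1` or
`k + 2`. Summing over `W ∈ Θ_k`, the vertex terms add up to `(k + 1) a_{k+1}` and the three kinds
of edge terms to at most `(k choose 2) a_k`, `k (k + 1) a_{k+1}` and `(k+2 choose 2) a_{k+2}`;
the identity `(d+1 choose 2) + (k choose 2) - d k = (d+1-k choose 2)` turns this into the
claim, strictly because of the `+ 1` contributed by each hinge.
-/

lemma mem_theta {V : Finset α} {𝒳 : Finset (Finset α)} {k : ℕ} {W : Finset α} :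
    W ∈ theta V 𝒳 k ↔ W ⊆ V ∧ #W = k ∧ 2 ≤ degX 𝒳 W := by
  simp [theta]

lemma degX_antitone (𝒳 : Finset (Finset α)) : Antitone (degX 𝒳) :=
  fun _ _ h => card_le_card <| monotone_filter_right _ fun _ _ hX => h.trans hX

lemma degX_filter_subset (𝒳 : Finset (Finset α)) (W U : Finset α) :
    degX {X ∈ 𝒳 | W ⊆ X} U = degX 𝒳 (W ∪ U) := by
  simp only [degX, filter_filter, union_subset_iff]

lemma degX_pos {𝒳 : Finset (Finset α)} {U : Finset α} : 0 < degX 𝒳 U ↔ ∃ X ∈ 𝒳, U ⊆ X := by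
  simp [degX, card_pos, filter_nonempty_iff]

def hingeExcess (𝒳 : Finset (Finset α)) (U : Finset α) : ℤ := degX 𝒳 U - 1

lemma hingeExcess_nonneg {𝒳 : Finset (Finset α)} {U : Finset α} (h : 0 < degX 𝒳 U) :
    0 ≤ hingeExcess 𝒳 U := by
  unfold hingeExcess; omega

lemma hingeExcess_nonneg_of_mem_theta {V : Finset α} {𝒳 : Finset (Finset α)} {j : ℕ}
    {U : Finset α} (hU : U ∈ theta V 𝒳 j) : 0 ≤ hingeExcess 𝒳 U :=
  hingeExcess_nonneg (zero_lt_two.trans_le (mem_theta.mp hU).2.2)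

lemma hingeExcess_filter_subset (𝒳 : Finset (Finset α)) (W U : Finset α) :
    hingeExcess {X ∈ 𝒳 | W ⊆ X} U = hingeExcess 𝒳 (W ∪ U) := by
  rw [hingeExcess, hingeExcess, degX_filter_subset]

-- `hingeSum V 𝒳 j` is the `a_j` of the statement.
noncomputable def hingeSum (V : Finset α) (𝒳 : Finset (Finset α)) (j : ℕ) : ℤ :=
  ∑ U ∈ theta V 𝒳 j, hingeExcess 𝒳 U

noncomputable def hingeNbrs (V : Finset α) (𝒳 : Finset (Finset α)) (W : Finset α) : Finset α :=
  {v ∈ V \ W | 2 ≤ degX 𝒳 (insert v W)}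

lemma sum_theta_sum_hingeNbrs {M : Type*} [AddCommMonoid M] (V : Finset α)
    (𝒳 : Finset (Finset α)) (k : ℕ) (f : Finset α → M) :
    ∑ W ∈ theta V 𝒳 k, ∑ v ∈ hingeNbrs V 𝒳 W, f (insert v W) =
      (k + 1) • ∑ U ∈ theta V 𝒳 (k + 1), f U := by
  have hcard : ∀ U ∈ theta V 𝒳 (k + 1), ∑ _v ∈ U, f U = (k + 1) • f U := fun U hU => by
    rw [sum_const, (mem_theta.mp hU).2.1]
  rw [smul_sum, ← sum_congr rfl hcard, sum_sigma', sum_sigma']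
  refine sum_nbij' (fun p => ⟨insert p.2 p.1, p.2⟩) (fun q => ⟨q.1.erase q.2, q.2⟩) ?_ ?_ ?_ ?_ ?_
  · rintro ⟨W, v⟩ h
    simp only [mem_sigma, hingeNbrs, mem_filter, mem_sdiff, mem_theta] at h ⊢
    obtain ⟨⟨hWV, hWk, -⟩, ⟨hvV, hvW⟩, hdeg⟩ := h
    exact ⟨⟨insert_subset hvV hWV, by rw [card_insert_of_notMem hvW, hWk], hdeg⟩,
      mem_insert_self v W⟩
  · rintro ⟨U, v⟩ h
    simp only [mem_sigma, hingeNbrs, mem_filter, mem_sdiff, mem_theta] at h ⊢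
    obtain ⟨⟨hUV, hUk, hdeg⟩, hvU⟩ := h
    refine ⟨⟨(erase_subset v U).trans hUV, by rw [card_erase_of_mem hvU, hUk]; rfl,
      hdeg.trans (degX_antitone 𝒳 (erase_subset v U))⟩, ⟨hUV hvU, notMem_erase v U⟩, ?_⟩
    rwa [insert_erase hvU]
  · rintro ⟨W, v⟩ h
    simp only [mem_sigma, hingeNbrs, mem_filter, mem_sdiff] at h
    simp [erase_insert h.2.1.2]
  · rintro ⟨U, v⟩ h
    simp only [mem_sigma] at h
    simp [insert_erase h.2]
  · intro p _
    rfl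

lemma iG_le_choose_two {E : Finset (Sym2 α)} (hE : ∀ e ∈ E, ¬ e.IsDiag) (U : Finset α) :
    iG E U ≤ (#U).choose 2 := by
  rw [← Sym2.card_image_offDiag]
  refine card_le_card fun e he => ?_
  simp only [inducedEdges, mem_filter] at he
  induction e using Sym2.ind with
  | _ a b =>
    have hab := hE _ he.1
    simp only [Sym2.mk_isDiag_iff] at hab
    simp only [mem_image, mem_offDiag, Prod.exists, Function.uncurry_apply_pair]
    exact ⟨a, b, ⟨he.2 a (Sym2.mem_mk_left a b), he.2 b (Sym2.mem_mk_right a b), hab⟩, rfl⟩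

noncomputable def hingeEdges (E : Finset (Sym2 α)) (𝒳 : Finset (Finset α)) (W : Finset α) :
    Finset (Sym2 α) :=
  {e ∈ E | 2 ≤ degX 𝒳 (W ∪ e.toFinset)}

lemma union_toFinset_mk_of_mem {W : Finset α} {b : α} (a : α) (hb : b ∈ W) :
    W ∪ s(a, b).toFinset = insert a W := by
  ext v
  simp only [Sym2.toFinset_mk_eq, mem_union, mem_insert, mem_singleton]
  constructor
  · rintro (h | rfl | rfl) <;> simp_all
  · rintro (rfl | h) <;> simp_all

lemma sum_hingeEdges_subset_le {E : Finset (Sym2 α)} (hE : ∀ e ∈ E, ¬ e.IsDiag)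
    {𝒳 : Finset (Finset α)} {W : Finset α} (hW : 0 < degX 𝒳 W) :
    ∑ e ∈ hingeEdges E 𝒳 W with e.toFinset ⊆ W, hingeExcess 𝒳 (W ∪ e.toFinset) ≤
      (#W).choose 2 * hingeExcess 𝒳 W := by
  have hsub : {e ∈ hingeEdges E 𝒳 W | e.toFinset ⊆ W} ⊆ inducedEdges E W := fun e he => by
    simp only [hingeEdges, inducedEdges, mem_filter] at he ⊢
    exact ⟨he.1.1, fun v hv => he.2 (Sym2.mem_toFinset.mpr hv)⟩
  have hcard : #{e ∈ hingeEdges E 𝒳 W | e.toFinset ⊆ W} ≤ (#W).choose 2 :=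
    (card_le_card hsub).trans (iG_le_choose_two hE W)
  calc _ = ∑ e ∈ hingeEdges E 𝒳 W with e.toFinset ⊆ W, hingeExcess 𝒳 W :=
        sum_congr rfl fun e he => by rw [union_eq_left.mpr (mem_filter.mp he).2]
    _ ≤ (#W).choose 2 * hingeExcess 𝒳 W := by
        rw [sum_const, nsmul_eq_mul]
        exact mul_le_mul_of_nonneg_right (by exact_mod_cast hcard) (hingeExcess_nonneg hW)

lemma sum_hingeEdges_mixed_le {V : Finset α} {E : Finset (Sym2 α)} (hval : ValidOn V E)
    (𝒳 : Finset (Finset α)) (W : Finset α) :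
    ∑ e ∈ hingeEdges E 𝒳 W with ¬ Disjoint e.toFinset W ∧ ¬ e.toFinset ⊆ W,
        hingeExcess 𝒳 (W ∪ e.toFinset) ≤
      #W * ∑ v ∈ hingeNbrs V 𝒳 W, hingeExcess 𝒳 (insert v W) := by
  set g : Sym2 α → ℤ := fun e => hingeExcess 𝒳 (W ∪ e.toFinset)
  have hg : ∀ p ∈ hingeNbrs V 𝒳 W ×ˢ W, g (Sym2.mk.uncurry p) = hingeExcess 𝒳 (insert p.1 W) :=
    fun p hp => by rw [← union_toFinset_mk_of_mem p.1 (mem_product.mp hp).2]; rfl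
  have hg_nonneg : ∀ e ∈ (hingeNbrs V 𝒳 W ×ˢ W).image Sym2.mk.uncurry, 0 ≤ g e := by
    simp only [mem_image]
    rintro _ ⟨p, hp, rfl⟩
    rw [hg p hp]
    exact hingeExcess_nonneg (zero_lt_two.trans_le (mem_filter.mp (mem_product.mp hp).1).2)
  have hsub : {e ∈ hingeEdges E 𝒳 W | ¬ Disjoint e.toFinset W ∧ ¬ e.toFinset ⊆ W} ⊆
      (hingeNbrs V 𝒳 W ×ˢ W).image Sym2.mk.uncurry := fun e he => by
    induction e using Sym2.ind with
    | _ a b =>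
      obtain ⟨⟨heE, hdeg⟩, hmeets, hleaves⟩ := (mem_filter.mp he).imp_left mem_filter.mp
      simp only [Sym2.toFinset_mk_eq, disjoint_insert_left, disjoint_singleton_left,
        insert_subset_iff, singleton_subset_iff, not_and_or, not_not] at hmeets hleaves
      have hV := (hval _ heE).2
      simp only [mem_image, mem_product, hingeNbrs, mem_filter, mem_sdiff, Prod.exists,
        Function.uncurry_apply_pair]
      by_cases haW : a ∈ W
      · have hbW : b ∉ W := by tauto
        rw [Sym2.eq_swap, union_toFinset_mk_of_mem b haW] at hdeg
        exact ⟨b, a, ⟨⟨⟨hV b (Sym2.mem_mk_right a b), hbW⟩, hdeg⟩, haW⟩, Sym2.eq_swap⟩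
      · have hbW : b ∈ W := by tauto
        rw [union_toFinset_mk_of_mem a hbW] at hdeg
        exact ⟨a, b, ⟨⟨⟨hV a (Sym2.mem_mk_left a b), haW⟩, hdeg⟩, hbW⟩, rfl⟩
  calc _ ≤ ∑ e ∈ (hingeNbrs V 𝒳 W ×ˢ W).image Sym2.mk.uncurry, g e :=
        sum_le_sum_of_subset_of_nonneg hsub fun e he _ => hg_nonneg e he
    _ ≤ ∑ p ∈ hingeNbrs V 𝒳 W ×ˢ W, g (Sym2.mk.uncurry p) := sum_image_le_of_nonneg hg_nonneg
    _ = #W * ∑ v ∈ hingeNbrs V 𝒳 W, hingeExcess 𝒳 (insert v W) := by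
        rw [sum_congr rfl hg, sum_product, mul_sum]
        simp

lemma sum_hingeEdges_le {V : Finset α} {E : Finset (Sym2 α)} (hval : ValidOn V E)
    {𝒳 : Finset (Finset α)} {k : ℕ} {W : Finset α} (hW : W ∈ theta V 𝒳 k) :
    ∑ e ∈ hingeEdges E 𝒳 W, hingeExcess 𝒳 (W ∪ e.toFinset) ≤
      k.choose 2 * hingeExcess 𝒳 W + k * ∑ v ∈ hingeNbrs V 𝒳 W, hingeExcess 𝒳 (insert v W) +
        ∑ e ∈ hingeEdges E 𝒳 W with Disjoint e.toFinset W, hingeExcess 𝒳 (W ∪ e.toFinset) := by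
  have hnonneg : ∀ e ∈ hingeEdges E 𝒳 W, 0 ≤ hingeExcess 𝒳 (W ∪ e.toFinset) := fun e he =>
    hingeExcess_nonneg (zero_lt_two.trans_le (mem_filter.mp he).2)
  have hinside : ∑ e ∈ hingeEdges E 𝒳 W with ¬ Disjoint e.toFinset W ∧ e.toFinset ⊆ W,
      hingeExcess 𝒳 (W ∪ e.toFinset) ≤
        ∑ e ∈ hingeEdges E 𝒳 W with e.toFinset ⊆ W, hingeExcess 𝒳 (W ∪ e.toFinset) :=
    sum_le_sum_of_subset_of_nonneg (monotone_filter_right _ fun _ _ h => h.2)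
      fun e he _ => hnonneg e (filter_subset _ _ he)
  rw [← sum_filter_add_sum_filter_not _ fun e => Disjoint e.toFinset W,
    ← sum_filter_add_sum_filter_not {e ∈ hingeEdges E 𝒳 W | ¬ Disjoint e.toFinset W}
      fun e => e.toFinset ⊆ W,
    filter_filter, filter_filter]
  obtain ⟨-, hWk, hdeg⟩ := mem_theta.mp hW
  have hsubset := sum_hingeEdges_subset_le (fun e he => (hval e he).1) (zero_lt_two.trans_le hdeg)
  have hmixed := sum_hingeEdges_mixed_le hval 𝒳 W
  rw [hWk] at hsubset hmixed
  linarith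

lemma sum_theta_sum_hingeEdges_disjoint_le {V : Finset α} {E : Finset (Sym2 α)}
    (hval : ValidOn V E) (𝒳 : Finset (Finset α)) (k : ℕ) :
    ∑ W ∈ theta V 𝒳 k, ∑ e ∈ hingeEdges E 𝒳 W with Disjoint e.toFinset W,
        hingeExcess 𝒳 (W ∪ e.toFinset) ≤
      (k + 2).choose 2 * hingeSum V 𝒳 (k + 2) := by
  set P := (theta V 𝒳 k).sigma fun W => {e ∈ hingeEdges E 𝒳 W | Disjoint e.toFinset W}
  set Q := (theta V 𝒳 (k + 2)).sigma (inducedEdges E)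
  let i : (Σ _ : Finset α, Sym2 α) → Σ _ : Finset α, Sym2 α := fun p => ⟨p.1 ∪ p.2.toFinset, p.2⟩
  have hmaps : ∀ p ∈ P, i p ∈ Q := by
    rintro ⟨W, e⟩ hp
    simp only [P, mem_sigma, hingeEdges, mem_filter, mem_theta] at hp
    obtain ⟨⟨hWV, hWk, -⟩, ⟨heE, hdeg⟩, hdisj⟩ := hp
    have heV : e.toFinset ⊆ V := fun v hv => (hval e heE).2 v (Sym2.mem_toFinset.mp hv)
    simp only [Q, i, mem_sigma, mem_theta, inducedEdges, mem_filter]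
    refine ⟨⟨union_subset hWV heV, ?_, hdeg⟩, heE, fun v hv => ?_⟩
    · rw [card_union_of_disjoint hdisj.symm, hWk,
        Sym2.card_toFinset_of_not_isDiag e (hval e heE).1]
    · exact mem_union_right W (Sym2.mem_toFinset.mpr hv)
  have hinj : Set.InjOn i P := by
    rintro ⟨W₁, e₁⟩ h₁ ⟨W₂, e₂⟩ h₂ h
    simp only [P, coe_sigma, Set.mem_sigma_iff, mem_coe, mem_filter] at h₁ h₂
    simp only [i, Sigma.mk.injEq, heq_eq_eq] at h
    obtain ⟨hU, rfl⟩ := h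
    rw [← union_sdiff_cancel_right h₁.2.2.symm, hU, union_sdiff_cancel_right h₂.2.2.symm]
  calc _ = ∑ p ∈ P, hingeExcess 𝒳 (p.1 ∪ p.2.toFinset) := by rw [sum_sigma']
    _ = ∑ q ∈ P.image i, hingeExcess 𝒳 q.1 := by rw [sum_image hinj]
    _ ≤ ∑ q ∈ Q, hingeExcess 𝒳 q.1 :=
        sum_le_sum_of_subset_of_nonneg (image_subset_iff.mpr hmaps) fun q hq _ =>
          hingeExcess_nonneg_of_mem_theta (mem_sigma.mp hq).1
    _ = ∑ U ∈ theta V 𝒳 (k + 2), iG E U * hingeExcess 𝒳 U := by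
        rw [sum_sigma]
        simp [iG]
    _ ≤ ∑ U ∈ theta V 𝒳 (k + 2), (k + 2).choose 2 * hingeExcess 𝒳 U := by
        refine sum_le_sum fun U hU => mul_le_mul_of_nonneg_right ?_
          (hingeExcess_nonneg_of_mem_theta hU)
        have hiG := iG_le_choose_two (fun e he => (hval e he).1) U
        rw [(mem_theta.mp hU).2.1] at hiG
        exact_mod_cast hiG
    _ = _ := (mul_sum _ _ _).symm

lemma sum_card_eq_card_sup_add (𝒮 : Finset (Finset α)) :
    ∑ X ∈ 𝒮, (#X : ℤ) = #(𝒮.sup id) + ∑ v ∈ 𝒮.sup id, hingeExcess 𝒮 {v} := by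
  have hcount : ∑ X ∈ 𝒮, #X = ∑ v ∈ 𝒮.sup id, degX 𝒮 {v} :=
    calc ∑ X ∈ 𝒮, #X = ∑ X ∈ 𝒮, #((𝒮.sup id).bipartiteAbove (fun X v => v ∈ X) X) :=
          sum_congr rfl fun X hX => by
            rw [bipartiteAbove, filter_mem_eq_inter,
              inter_eq_right.mpr (show X ⊆ 𝒮.sup id from le_sup (f := id) hX)]
      _ = ∑ v ∈ 𝒮.sup id, degX 𝒮 {v} := by
          rw [sum_card_bipartiteAbove_eq_sum_card_bipartiteBelow]
          simp [bipartiteBelow, degX]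
  simp only [hingeExcess, sum_sub_distrib, sum_const, nsmul_one]
  rw [← Nat.cast_sum, ← Nat.cast_sum, hcount]
  ring

lemma sum_iG_le (E : Finset (Sym2 α)) (𝒮 : Finset (Finset α)) :
    ∑ X ∈ 𝒮, (iG E X : ℤ) ≤
      iG E (𝒮.sup id) + ∑ e ∈ E with 2 ≤ degX 𝒮 e.toFinset, hingeExcess 𝒮 e.toFinset := by
  have hcount : ∑ X ∈ 𝒮, iG E X = ∑ e ∈ E, degX 𝒮 e.toFinset :=
    calc ∑ X ∈ 𝒮, iG E X = ∑ X ∈ 𝒮, #(E.bipartiteAbove (fun X e => ∀ v ∈ e, v ∈ X) X) := rfl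
      _ = ∑ e ∈ E, degX 𝒮 e.toFinset := by
          rw [sum_card_bipartiteAbove_eq_sum_card_bipartiteBelow]
          simp [bipartiteBelow, degX, subset_iff]
  rw [← Nat.cast_sum, hcount, iG, inducedEdges, card_filter, sum_filter, Nat.cast_sum, Nat.cast_sum,
    ← sum_add_distrib]
  refine sum_le_sum fun e _ => ?_
  by_cases hcov : 0 < degX 𝒮 e.toFinset
  · have hY : ∀ v ∈ e, v ∈ 𝒮.sup id := fun v hv => by
      obtain ⟨X, hX, heX⟩ := degX_pos.mp hcov
      exact le_sup (f := id) hX (heX (Sym2.mem_toFinset.mpr hv))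
    rw [if_pos hY]
    split_ifs <;> simp only [hingeExcess, Nat.cast_one] <;> omega
  · split_ifs <;> simp only [hingeExcess, Nat.cast_one, Nat.cast_zero] <;> omega

set_option linter.unusedSectionVars false in
lemma mem_critCover {d : ℕ} {V : Finset α} {E : Finset (Sym2 α)} {X : Finset α} :
    X ∈ critCover d V E ↔ ∃ F, CritComponent d V E X F := by
  simp only [critCover, mem_filter, mem_powerset, and_iff_right_iff_imp]
  rintro ⟨F, hF⟩
  exact hF.1.1.1

set_option linter.unusedSectionVars false in
lemma CritSubgraph.mul_card_le_iG_add {d : ℕ} {V : Finset α} {E : Finset (Sym2 α)}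
    {U : Finset α} {F : Finset (Sym2 α)} (h : CritSubgraph d V E U F) (hU : d + 2 ≤ #U) :
    d * #U ≤ iG E U + (d + 1).choose 2 := by
  have hF : #F ≤ iG E U := card_le_card fun e he => mem_filter.mpr ⟨h.1.2.1 he, h.1.2.2 e he⟩
  rcases h.2 with ⟨hU2, -⟩ | ⟨-, hcrit⟩
  · obtain rfl : d = 0 := by omega
    simp
  · omega

lemma iG_sup_add_lt {d : ℕ} {V : Finset α} {E : Finset (Sym2 α)} (hsp : Sparse d V E)
    (hbig : ∀ U F, CritComponent d V E U F → d + 2 ≤ #U) {𝒮 : Finset (Finset α)}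
    (h𝒮 : 𝒮 ⊆ critCover d V E) (h2 : 2 ≤ #𝒮) :
    iG E (𝒮.sup id) + (d + 1).choose 2 < d * #(𝒮.sup id) := by
  set Y := 𝒮.sup id
  have hcomp : ∀ X ∈ 𝒮, ∃ F, CritComponent d V E X F := fun X hX => mem_critCover.mp (h𝒮 hX)
  have hXY : ∀ X ∈ 𝒮, X ⊆ Y := fun X hX => le_sup (f := id) hX
  have hYV : Y ⊆ V := Finset.sup_le fun X hX => (hcomp X hX).choose_spec.1.1.1
  obtain ⟨X₀, hX₀, X₁, hX₁, hne⟩ := one_lt_card.mp h2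
  have hYcard : d + 2 ≤ #Y := by
    obtain ⟨F, hF⟩ := hcomp X₀ hX₀
    exact (hbig _ _ hF).trans (card_le_card (hXY X₀ hX₀))
  refine lt_of_le_of_ne (hsp Y hYV (by omega)) fun hcrit => hne ?_
  have hY : CritSubgraph d V E Y (inducedEdges E Y) :=
    ⟨⟨hYV, filter_subset _ _, fun e he => (mem_filter.mp he).2⟩, Or.inr ⟨hYcard, hcrit⟩⟩
  have hXeq : ∀ X ∈ 𝒮, X = Y := fun X hX => by
    obtain ⟨F, hF⟩ := hcomp X hX
    refine (hF.2 Y _ hY (hXY X hX) fun e he => ?_).1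
    exact mem_filter.mpr ⟨hF.1.1.2.1 he, fun v hv => hXY X hX (hF.1.1.2.2 e he v hv)⟩
  rw [hXeq X₀ hX₀, hXeq X₁ hX₁]

lemma mul_sum_hingeExcess_add_one_le {d : ℕ} {V : Finset α} {E : Finset (Sym2 α)}
    (hsp : Sparse d V E) (hbig : ∀ U F, CritComponent d V E U F → d + 2 ≤ #U)
    {𝒮 : Finset (Finset α)} (h𝒮 : 𝒮 ⊆ critCover d V E) (h2 : 2 ≤ #𝒮) :
    d * ∑ v ∈ 𝒮.sup id, hingeExcess 𝒮 {v} + 1 ≤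
      (#𝒮 - 1) * (d + 1).choose 2 +
        ∑ e ∈ E with 2 ≤ degX 𝒮 e.toFinset, hingeExcess 𝒮 e.toFinset := by
  have hmem : ∀ X ∈ 𝒮, (d * #X : ℤ) ≤ iG E X + (d + 1).choose 2 := fun X hX => by
    obtain ⟨F, hF⟩ := mem_critCover.mp (h𝒮 hX)
    exact_mod_cast hF.1.mul_card_le_iG_add (hbig X F hF)
  have hsum := sum_le_sum hmem
  rw [← mul_sum, sum_add_distrib, sum_const, nsmul_eq_mul, sum_card_eq_card_sup_add] at hsum
  have hY : (iG E (𝒮.sup id) + (d + 1).choose 2 + 1 : ℤ) ≤ d * #(𝒮.sup id) := by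
    exact_mod_cast iG_sup_add_lt hsp hbig h𝒮 h2
  linarith [sum_iG_le E 𝒮]

lemma sum_hingeNbrs_le_sum_sup {V : Finset α} {𝒳 : Finset (Finset α)} {k : ℕ} {W : Finset α}
    (hW : W ∈ theta V 𝒳 k) :
    k * hingeExcess 𝒳 W + ∑ v ∈ hingeNbrs V 𝒳 W, hingeExcess 𝒳 (insert v W) ≤
      ∑ v ∈ {X ∈ 𝒳 | W ⊆ X}.sup id, hingeExcess 𝒳 (insert v W) := by
  obtain ⟨-, hWk, hdeg⟩ := mem_theta.mp hW
  set Y := {X ∈ 𝒳 | W ⊆ X}.sup id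
  have hY : ∀ v, v ∈ Y ↔ 0 < degX 𝒳 (insert v W) := fun v => by
    simp only [Y, mem_sup, mem_filter, id, degX_pos, insert_subset_iff]
    exact exists_congr fun X => by tauto
  have hWY : W ⊆ Y := fun v hv => (hY v).mpr (by rw [insert_eq_of_mem hv]; omega)
  have hsumW : ∑ v ∈ W, hingeExcess 𝒳 (insert v W) = k * hingeExcess 𝒳 W := by
    rw [sum_congr rfl fun v hv => by rw [insert_eq_of_mem hv], sum_const, hWk, nsmul_eq_mul]
  have hnbrs : ∑ v ∈ hingeNbrs V 𝒳 W, hingeExcess 𝒳 (insert v W) ≤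
      ∑ v ∈ Y \ W, hingeExcess 𝒳 (insert v W) := by
    refine sum_le_sum_of_subset_of_nonneg (fun v hv => ?_) fun v hv _ =>
      hingeExcess_nonneg ((hY v).mp (mem_sdiff.mp hv).1)
    obtain ⟨⟨-, hvW⟩, hv2⟩ := mem_filter.mp hv |>.imp_left mem_sdiff.mp
    exact mem_sdiff.mpr ⟨(hY v).mpr (by omega), hvW⟩
  rw [← sum_sdiff hWY, hsumW]
  linarith

lemma hinge_inequality_of_mem_theta {d k : ℕ} {V : Finset α} {E : Finset (Sym2 α)}
    (hsp : Sparse d V E) (hbig : ∀ U F, CritComponent d V E U F → d + 2 ≤ #U) {W : Finset α}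
    (hW : W ∈ theta V (critCover d V E) k) :
    d * k * hingeExcess (critCover d V E) W +
        d * ∑ v ∈ hingeNbrs V (critCover d V E) W, hingeExcess (critCover d V E) (insert v W) + 1 ≤
      (d + 1).choose 2 * hingeExcess (critCover d V E) W +
        ∑ e ∈ hingeEdges E (critCover d V E) W,
          hingeExcess (critCover d V E) (W ∪ e.toFinset) := by
  set 𝒳 := critCover d V E
  have hunion := mul_sum_hingeExcess_add_one_le hsp hbig (𝒮 := {X ∈ 𝒳 | W ⊆ X})
    (filter_subset _ _) (mem_theta.mp hW).2.2
  have hm : (#{X ∈ 𝒳 | W ⊆ X} : ℤ) - 1 = hingeExcess 𝒳 W := rfl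
  simp only [hm, hingeExcess_filter_subset, degX_filter_subset, union_singleton] at hunion
  rw [← hingeEdges] at hunion
  have hvert := mul_le_mul_of_nonneg_left (sum_hingeNbrs_le_sum_sup hW) (Nat.cast_nonneg d)
  linarith

lemma choose_two_add_choose_two {d k : ℕ} (hk : k ≤ d) :
    (d + 1).choose 2 + k.choose 2 = (d + 1 - k).choose 2 + d * k := by
  obtain ⟨t, rfl⟩ := Nat.exists_eq_add_of_le hk
  rw [show k + t + 1 - k = t + 1 by omega]
  apply Nat.cast_injective (R := ℚ)
  push_cast [Nat.cast_choose_two]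
  ring

theorem hingeSum_lt {d k : ℕ} {V : Finset α} {E : Finset (Sym2 α)} (hval : ValidOn V E)
    (hsp : Sparse d V E) (hbig : ∀ U F, CritComponent d V E U F → d + 2 ≤ #U) (hk : k ≤ d)
    (hne : (theta V (critCover d V E) k).Nonempty) :
    ((d : ℤ) - k) * (k + 1) * hingeSum V (critCover d V E) (k + 1) -
        (k + 2).choose 2 * hingeSum V (critCover d V E) (k + 2) <
      (d + 1 - k).choose 2 * hingeSum V (critCover d V E) k := by
  set 𝒳 := critCover d V E
  have hlocal : ∀ W ∈ theta V 𝒳 k,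
      ((d * k : ℤ) - (d + 1).choose 2 - k.choose 2) * hingeExcess 𝒳 W +
          (d - k) * ∑ v ∈ hingeNbrs V 𝒳 W, hingeExcess 𝒳 (insert v W) + 1 ≤
        ∑ e ∈ hingeEdges E 𝒳 W with Disjoint e.toFinset W, hingeExcess 𝒳 (W ∪ e.toFinset) :=
    fun W hW => by linarith [hinge_inequality_of_mem_theta hsp hbig hW, sum_hingeEdges_le hval hW]
  have hsum := (sum_le_sum hlocal).trans (sum_theta_sum_hingeEdges_disjoint_le hval 𝒳 k)
  rw [sum_add_distrib, sum_add_distrib, ← mul_sum, ← mul_sum, sum_theta_sum_hingeNbrs,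
    sum_const, nsmul_eq_mul, nsmul_eq_mul, mul_one] at hsum
  have hcard : (1 : ℤ) ≤ #(theta V 𝒳 k) := by exact_mod_cast hne.card_pos
  have hchoose : ((d + 1).choose 2 + k.choose 2 : ℤ) = (d + 1 - k).choose 2 + d * k := by
    exact_mod_cast choose_two_add_choose_two hk
  rw [← hingeSum, ← hingeSum, Nat.cast_add_one] at hsum
  linear_combination hsum + hcard + hingeSum V 𝒳 k * hchoose

/-- Lemma 3.3(a) of the paper. -/
theorem stmt6 (d k : ℕ) (hd : 2 ≤ d) (hk : k ≤ d - 2)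
    (V : Finset α) (E : Finset (Sym2 α)) (hval : ValidOn V E) (hsp : Sparse d V E)
    (𝒳 : Finset (Finset α)) (h𝒳 : 𝒳 = critCover d V E)
    (hbig : ∀ U F, CritComponent d V E U F → d + 2 ≤ U.card)
    (a : ℕ → ℤ) (ha : ∀ j ≤ d, a j = ∑ U ∈ theta V 𝒳 j, ((degX 𝒳 U : ℤ) - 1))
    (hne : (theta V 𝒳 k).Nonempty) :
    ((d : ℤ) - k) * (k + 1) * a (k + 1) - (Nat.choose (k + 2) 2 : ℤ) * a (k + 2) <
      (Nat.choose (d + 1 - k) 2 : ℤ) * a k := by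
  subst h𝒳
  rw [ha k (by omega), ha (k + 1) (by omega), ha (k + 2) (by omega)]
  exact hingeSum_lt hval hsp hbig (by omega) hne
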